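/- arXiv:2512.09080 — 5 statements merged into one kernel-verified Lean document; each statement's English description precedes it below -/
import Mathlib

section
/- The out-neighborhood weight function is submodular: for a directed graph G with nonnegative vertex weights and any two vertex sets A, B ⊆ V(G), w(N⁺(A ∩ B)) + w(N⁺(A ∪ B)) ≤ w(N⁺(A)) + w(N⁺(B)). -/
open Finset

/-- The set of out-neighbors of `A` outside of `A`. -/
def Nplus {V : Type*} [Fintype V] [DecidableEq V] (E : Finset (V × V)) (A : Finset V) :
    Finset V :=
  Finset.univ.filter (fun u => u ∉ A ∧ ∃ v ∈ A, (v, u) ∈ E)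

lemma mem_Nplus {V : Type*} [Fintype V] [DecidableEq V] (E : Finset (V × V)) (A : Finset V)
    (u : V) : u ∈ Nplus E A ↔ u ∉ A ∧ ∃ v ∈ A, (v, u) ∈ E := by
  simp [Nplus]

/-- Submodularity of the weighted out-neighborhood of a directed graph. -/
theorem stmt3 {V : Type*} [Fintype V] [DecidableEq V]
    (E : Finset (V × V)) (w : V → ℝ) (hw : ∀ v, 0 ≤ w v)
    (A B : Finset V) :
    ∑ u ∈ Nplus E (A ∩ B), w u + ∑ u ∈ Nplus E (A ∪ B), w u ≤
      ∑ u ∈ Nplus E A, w u + ∑ u ∈ Nplus E B, w u := by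
  classical
  have hrw : ∀ S : Finset V, ∑ u ∈ Nplus E S, w u
      = ∑ u ∈ (univ : Finset V), (if u ∈ Nplus E S then w u else 0) := by
    intro S
    rw [← Finset.sum_filter]
    congr 1
    ext u
    simp [Nplus]
  rw [hrw (A ∩ B), hrw (A ∪ B), hrw A, hrw B, ← Finset.sum_add_distrib,
    ← Finset.sum_add_distrib]
  apply Finset.sum_le_sum
  intro u _
  by_cases h1 : u ∈ Nplus E (A ∩ B) <;> by_cases h2 : u ∈ Nplus E (A ∪ B) <;>
    simp only [h1, h2, if_true, if_false, if_pos, if_neg, add_zero, zero_add]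
  · -- both: show u ∈ Nplus E A and u ∈ Nplus E B
    rw [mem_Nplus] at h1 h2
    obtain ⟨hnAB, v, hv, hvE⟩ := h1
    obtain ⟨hnU, _⟩ := h2
    rw [Finset.mem_inter] at hv
    rw [Finset.mem_union] at hnU
    push_neg at hnU
    have hA : u ∈ Nplus E A := (mem_Nplus E A u).2 ⟨hnU.1, v, hv.1, hvE⟩
    have hB : u ∈ Nplus E B := (mem_Nplus E B u).2 ⟨hnU.2, v, hv.2, hvE⟩
    simp [hA, hB]
  · -- only h1: u ∈ N(A∩B), u ∉ N(A∪B). Show w u ≤ rhs.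
    rw [mem_Nplus] at h1
    obtain ⟨hnAB, v, hv, hvE⟩ := h1
    rw [Finset.mem_inter] at hv
    rw [Finset.mem_inter] at hnAB
    push_neg at hnAB
    by_cases hA : u ∈ A
    · have hB : u ∈ Nplus E B := (mem_Nplus E B u).2 ⟨hnAB hA, v, hv.2, hvE⟩
      simp [hB]
      split_ifs <;> [linarith [hw u]; linarith]
    · have hAn : u ∈ Nplus E A := (mem_Nplus E A u).2 ⟨hA, v, hv.1, hvE⟩
      simp [hAn]
      split_ifs <;> [linarith [hw u]; linarith]
  · -- only h2: u ∈ N(A∪B)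
    rw [mem_Nplus] at h2
    obtain ⟨hnU, v, hv, hvE⟩ := h2
    rw [Finset.mem_union] at hnU hv
    push_neg at hnU
    rcases hv with hv | hv
    · have hAn : u ∈ Nplus E A := (mem_Nplus E A u).2 ⟨hnU.1, v, hv, hvE⟩
      simp [hAn]
      split_ifs <;> [linarith [hw u]; linarith]
    · have hBn : u ∈ Nplus E B := (mem_Nplus E B u).2 ⟨hnU.2, v, hv, hvE⟩
      simp [hBn]
      split_ifs <;> [linarith [hw u]; linarith]
  · -- neither
    split_ifs <;> [linarith [hw u, hw u]; linarith [hw u]; linarith [hw u]; linarith]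
end

section
/- Let G be a directed graph with positive vertex weights admitting a global minimum vertex-cut (L*,S*,R*) with w(L*) ≤ w(R*), and let w* = max_{v∈V(G)} w(F⁺(v)) where F⁺(v) = V(G) \ ({v} ∪ N⁺(v)). Then w(R*) ≥ w*/2. -/
open Finset

/-- A vertex-cut: a partition (L,S,R) of the vertices with L,R nonempty and
no edge from L to R. -/
def IsVertexCut {V : Type*} [Fintype V] [DecidableEq V]
    (E : Finset (V × V)) (L S R : Finset V) : Prop :=
  L ∪ S ∪ R = Finset.univ ∧ Disjoint L S ∧ Disjoint L R ∧ Disjoint S R ∧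
    L.Nonempty ∧ R.Nonempty ∧ ∀ e ∈ E, ¬(e.1 ∈ L ∧ e.2 ∈ R)

/-- `F⁺(v) = V \ ({v} ∪ N⁺(v))`: the vertices not reachable from `v` by at most one edge. -/
def Fplus {V : Type*} [Fintype V] [DecidableEq V] (E : Finset (V × V)) (v : V) : Finset V :=
  Finset.univ.filter (fun u => u ≠ v ∧ (v, u) ∉ E)

lemma cut_sum {V : Type*} [Fintype V] [DecidableEq V]
    (E : Finset (V × V)) (L S R : Finset V) (w : V → ℝ)
    (h : IsVertexCut E L S R) :
    ∑ v, w v = ∑ v ∈ L, w v + ∑ v ∈ S, w v + ∑ v ∈ R, w v := by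
  obtain ⟨hu, h1, h2, h3, -⟩ := h
  rw [← hu, Finset.sum_union (by
    rw [Finset.disjoint_union_left]; exact ⟨h2, h3⟩), Finset.sum_union h1]

/-- If (L*,S*,R*) is a global minimum vertex-cut with w(L*) ≤ w(R*) and
w* = max_v w(F⁺(v)) > 0, then w(R*) ≥ w*/2. -/
theorem stmt7 {V : Type*} [Fintype V] [DecidableEq V]
    (E : Finset (V × V)) (hloop : ∀ e ∈ E, e.1 ≠ e.2)
    (w : V → ℝ) (hw : ∀ v, 0 < w v)
    (Lstar Sstar Rstar : Finset V)
    (hcut : IsVertexCut E Lstar Sstar Rstar)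
    (hmin : ∀ L S R, IsVertexCut E L S R → ∑ v ∈ Sstar, w v ≤ ∑ v ∈ S, w v)
    (hLR : ∑ v ∈ Lstar, w v ≤ ∑ v ∈ Rstar, w v)
    (wstar : ℝ) (hpos : 0 < wstar)
    (hub : ∀ v : V, ∑ u ∈ Fplus E v, w u ≤ wstar)
    (hatt : ∃ v : V, ∑ u ∈ Fplus E v, w u = wstar) :
    wstar / 2 ≤ ∑ v ∈ Rstar, w v := by
  obtain ⟨v, hv⟩ := hatt
  set N : Finset V := univ.filter (fun u => u ≠ v ∧ (v, u) ∈ E) with hN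
  have hFne : (Fplus E v).Nonempty := by
    rw [Finset.nonempty_iff_ne_empty]
    intro h
    rw [h, Finset.sum_empty] at hv
    exact absurd hv (ne_of_lt hpos)
  have hcut2 : IsVertexCut E {v} N (Fplus E v) := by
    refine ⟨?_, ?_, ?_, ?_, ⟨v, mem_singleton_self v⟩, hFne, ?_⟩
    · ext u
      by_cases huv : u = v <;> simp [hN, Fplus, huv] <;> tauto
    · simp [Finset.disjoint_left, hN]
    · simp [Finset.disjoint_left, Fplus]
    · simp [Finset.disjoint_left, hN, Fplus]; tauto
    · rintro e he ⟨h1, h2⟩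
      simp only [Finset.mem_singleton] at h1
      simp only [Fplus, Finset.mem_filter] at h2
      exact h2.2.2 (by rw [← h1]; exact he)
  have hS := hmin _ _ _ hcut2
  have e1 := cut_sum E Lstar Sstar Rstar w hcut
  have e2 := cut_sum E {v} N (Fplus E v) w hcut2
  rw [Finset.sum_singleton, hv] at e2
  have := hw v
  linarith
end

section
/- Let G be a directed graph and y a vertex, and let G_y be the subgraph with V(G_y) = V(G) and E(G_y) = δ⁻(y) ∪ E_G(F⁻(y), V(G)), where F⁻(y) = V(G) \ ({y} ∪ N⁻(y)). Then a triple (L,S,R) with y ∈ R is a vertex-cut of G_y if and only if it is a vertex-cut of G. -/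
open Finset

/-- `F⁻(y) = V \ ({y} ∪ N⁻(y))`: the vertices that cannot reach `y` by at most one edge. -/
def Fminus {V : Type*} [Fintype V] [DecidableEq V] (E : Finset (V × V)) (y : V) : Finset V :=
  Finset.univ.filter (fun u => u ≠ y ∧ (u, y) ∉ E)

/-- The edge set of the sparsified graph `G_y`:
`E(G_y) = δ⁻(y) ∪ E_G(F⁻(y), V(G))`. -/
def Ey {V : Type*} [Fintype V] [DecidableEq V] (E : Finset (V × V)) (y : V) :
    Finset (V × V) :=
  E.filter (fun e => e.2 = y ∨ e.1 ∈ Fminus E y)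

/-- A triple (L,S,R) with `y ∈ R` is a vertex-cut of the sparsified graph `G_y`
iff it is a vertex-cut of `G`. -/
theorem stmt9 {V : Type*} [Fintype V] [DecidableEq V]
    (E : Finset (V × V)) (hloop : ∀ e ∈ E, e.1 ≠ e.2)
    (y : V) (L S R : Finset V) (hy : y ∈ R) :
    IsVertexCut (Ey E y) L S R ↔ IsVertexCut E L S R := by
  constructor
  · rintro ⟨h1, h2, h3, h4, h5, h6, h7⟩
    refine ⟨h1, h2, h3, h4, h5, h6, ?_⟩
    rintro ⟨u, v⟩ he ⟨hu, hv⟩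
    by_cases hvy : v = y
    · subst hvy; exact h7 (u, v) (by simp [Ey, he]) ⟨hu, hv⟩
    · have huy : u ≠ y := fun h => Finset.disjoint_left.mp h3 hu (h ▸ hy)
      have huyE : (u, y) ∉ E := fun hE =>
        h7 (u, y) (by simp [Ey, hE]) ⟨hu, hy⟩
      exact h7 (u, v) (by simp [Ey, he, Fminus, huy, huyE]) ⟨hu, hv⟩
  · rintro ⟨h1, h2, h3, h4, h5, h6, h7⟩
    exact ⟨h1, h2, h3, h4, h5, h6, fun e he => h7 e (Finset.mem_filter.mp he).1⟩
end

section
/- Weight scaling preserves optimal cuts in the small-OPT regime: let w : V → ℕ be nonnegative vertex weights on an n-vertex graph, let w'(v) = 4n²·w(v) + 1, and let (L,S,R) be a vertex-cut minimizing w(S) with w(S) < 1/ε for some ε ∈ (0,1). Then every vertex-cut (L',S',R') with w(S') ≥ w(S) + 1 satisfies w'(S') > (1 + ε/2)·w'(S). In particular, any (1+ε/2)-approximately optimal vertex-cut under w' is optimal under w. -/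
open Finset

/-- The scaled weights `w'(v) = 4n²·w(v) + 1`. -/
def wprime {V : Type*} [Fintype V] (w : V → ℕ) (v : V) : ℕ :=
  4 * (Fintype.card V) ^ 2 * w v + 1

/-- Weight scaling preserves optimal cuts in the small-OPT regime:
if (L,S,R) minimizes w(S) and w(S) < 1/ε, then any vertex-cut (L',S',R') with
w(S') ≥ w(S)+1 satisfies w'(S') > (1 + ε/2)·w'(S); in particular, any
(1+ε/2)-approximately optimal vertex-cut under w' is optimal under w. -/
theorem stmt14 {V : Type*} [Fintype V] [DecidableEq V]
    (E : Finset (V × V)) (w : V → ℕ)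
    (ε : ℝ) (hε0 : 0 < ε) (hε1 : ε < 1)
    (L S R : Finset V) (hcut : IsVertexCut E L S R)
    (hmin : ∀ L' S' R', IsVertexCut E L' S' R' → ∑ v ∈ S, w v ≤ ∑ v ∈ S', w v)
    (hsmall : ((∑ v ∈ S, w v : ℕ) : ℝ) < 1 / ε) :
    (∀ L' S' R', IsVertexCut E L' S' R' →
      (∑ v ∈ S, w v) + 1 ≤ ∑ v ∈ S', w v →
      (1 + ε / 2) * ((∑ v ∈ S, wprime w v : ℕ) : ℝ) <
        ((∑ v ∈ S', wprime w v : ℕ) : ℝ)) ∧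
    (∀ L' S' R', IsVertexCut E L' S' R' →
      (∀ L'' S'' R'', IsVertexCut E L'' S'' R'' →
        ((∑ v ∈ S', wprime w v : ℕ) : ℝ) ≤
          (1 + ε / 2) * ((∑ v ∈ S'', wprime w v : ℕ) : ℝ)) →
      ∀ L'' S'' R'', IsVertexCut E L'' S'' R'' →
        ∑ v ∈ S', w v ≤ ∑ v ∈ S'', w v) := by

  have hn1 : 1 ≤ Fintype.card V := Fintype.card_pos_iff.mpr ⟨hcut.2.2.2.2.1.choose⟩
  have hsum : ∀ T : Finset V, ∑ v ∈ T, wprime w v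
      = 4 * (Fintype.card V) ^ 2 * (∑ v ∈ T, w v) + T.card := by
    intro T
    simp [wprime, Finset.sum_add_distrib, Finset.mul_sum]
  have hεa : ε * ((∑ v ∈ S, w v : ℕ) : ℝ) < 1 := by
    rw [lt_div_iff₀ hε0] at hsmall
    linarith [hsmall]
  have part1 : ∀ L' S' R', IsVertexCut E L' S' R' →
      (∑ v ∈ S, w v) + 1 ≤ ∑ v ∈ S', w v →
      (1 + ε / 2) * ((∑ v ∈ S, wprime w v : ℕ) : ℝ) <
        ((∑ v ∈ S', wprime w v : ℕ) : ℝ) := by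
    intro L' S' R' hc hb
    rw [hsum S, hsum S']
    have h1 : (S.card : ℝ) ≤ (Fintype.card V : ℝ) := by
      exact_mod_cast Finset.card_le_univ S
    have h2 : (0:ℝ) ≤ (S'.card : ℝ) := by positivity
    have hb' : ((∑ v ∈ S, w v : ℕ) : ℝ) + 1 ≤ ((∑ v ∈ S', w v : ℕ) : ℝ) := by
      exact_mod_cast hb
    have hn' : (1:ℝ) ≤ (Fintype.card V : ℝ) := by exact_mod_cast hn1
    push_cast at hεa hb' ⊢
    nlinarith [hεa, h1, h2, hb', hn', sq_nonneg ((Fintype.card V : ℝ)),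
      mul_lt_mul_of_pos_left hεa (show (0:ℝ) < 2 * (Fintype.card V : ℝ)^2 by positivity),
      mul_le_mul_of_nonneg_left hn' (show (0:ℝ) ≤ (Fintype.card V : ℝ) by linarith)]
  refine ⟨part1, ?_⟩
  intro L' S' R' hc happrox L'' S'' R'' hc''
  have heq : ∑ v ∈ S', w v ≤ ∑ v ∈ S, w v := by
    by_contra h
    push_neg at h
    have h3 := part1 L' S' R' hc (by omega)
    have h4 := happrox L S R hcut
    linarith
  exact le_trans heq (hmin _ _ _ hc'')
end

section
/- Uncrossing a minimum s-t edge-cut with a small cut absorbs the small side: let (A,A') be a minimum s-y edge-cut in a weighted directed graph H containing an edge (s,x) of weight c, and let (X̂,Ŷ) be an x-y edge-cut of value w(∂⁺(X̂)) < c with x ∉ A. Then the cut (A ∪ X̂, A' ∩ Ŷ) would have value strictly less than that of (A,A'), a contradiction; hence every vertex x with an edge (s,x) of weight c and λ_H(x,y) < c belongs to A. -/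
open Finset

/-- If (A, V∖A) is a minimum s-y edge-cut in a positively edge-weighted directed graph
containing an edge (s,x) of weight c, and there exists an x-y edge-cut of value less
than c, then x belongs to A. -/
theorem stmt16 {V : Type*} [Fintype V] [DecidableEq V]
    (E : Finset (V × V)) (w : V × V → ℝ) (hw : ∀ e ∈ E, 0 < w e)
    (s y x : V) (hsy : s ≠ y) (hsx : s ≠ x) (hxy : x ≠ y)
    (A : Finset V) (hsA : s ∈ A) (hyA : y ∉ A)
    (hmin : ∀ B : Finset V, s ∈ B → y ∉ B →
      ∑ e ∈ E.filter (fun e => e.1 ∈ A ∧ e.2 ∉ A), w e ≤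
        ∑ e ∈ E.filter (fun e => e.1 ∈ B ∧ e.2 ∉ B), w e)
    (hedge : (s, x) ∈ E)
    (Xh : Finset V) (hxX : x ∈ Xh) (hyX : y ∉ Xh)
    (hXval : ∑ e ∈ E.filter (fun e => e.1 ∈ Xh ∧ e.2 ∉ Xh), w e < w (s, x)) :
    x ∈ A := by
  by_contra hxA
  set B : Finset V := A ∪ Xh with hB
  have hsB : s ∈ B := mem_union_left _ hsA
  have hyB : y ∉ B := by simp [hB, hyA, hyX]
  set FA := E.filter (fun e => e.1 ∈ A ∧ e.2 ∉ A) with hFA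
  set FX := E.filter (fun e => e.1 ∈ Xh ∧ e.2 ∉ Xh) with hFX
  set FB := E.filter (fun e => e.1 ∈ B ∧ e.2 ∉ B) with hFB
  have hsxFA : (s, x) ∈ FA := by simp [hFA, hedge, hsA, hxA]
  have hsub : FB ⊆ (FA ∪ FX).erase (s, x) := by
    intro e he
    simp only [hFB, mem_filter, hB, mem_union, not_or] at he
    obtain ⟨heE, h1, h2, h3⟩ := he
    refine mem_erase.2 ⟨?_, ?_⟩
    · rintro rfl; exact h3 hxX
    · simp only [mem_union, hFA, hFX, mem_filter]
      rcases h1 with h | h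
      · exact Or.inl ⟨heE, h, h2⟩
      · exact Or.inr ⟨heE, h, h3⟩
  have hnn : ∀ e ∈ FA ∪ FX, 0 ≤ w e := by
    intro e he
    have : e ∈ E := by
      rcases mem_union.1 he with h | h <;> exact (mem_filter.1 h).1
    exact (hw e this).le
  have h1 : ∑ e ∈ FB, w e ≤ ∑ e ∈ (FA ∪ FX).erase (s, x), w e :=
    Finset.sum_le_sum_of_subset_of_nonneg hsub (fun e he _ => hnn e (mem_of_mem_erase he))
  have h2 : ∑ e ∈ (FA ∪ FX).erase (s, x), w e = ∑ e ∈ FA ∪ FX, w e - w (s, x) :=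
    Finset.sum_erase_eq_sub (mem_union_left _ hsxFA)
  have h3 : ∑ e ∈ FA ∪ FX, w e ≤ ∑ e ∈ FA, w e + ∑ e ∈ FX, w e := by
    rw [← Finset.sum_union_inter]
    have : 0 ≤ ∑ e ∈ FA ∩ FX, w e :=
      Finset.sum_nonneg (fun e he => hnn e (mem_union_left _ (mem_of_mem_inter_left he)))
    linarith
  have := hmin B hsB hyB
  linarith
end
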